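/- arXiv:2305.06478 — 2 statements merged into one kernel-verified Lean document; each statement's English description precedes it below -/
import Mathlib

section
/- In the active sensing setup, suppose the waveform matrix S satisfies rank(S)·N_rx ≥ N_Σ. Then krank(B) = N_Σ if and only if both krank(A) = N_Σ and rank((S ⊗ I_{N_rx})·Υ) = N_Σ, where B = (S·A_tx) ⊙ A_rx. -/
open scoped Kronecker
open Matrix

/-- The Kruskal rank of a complex matrix `M`: the largest integer `r` such that
every set of `r` columns of `M` is linearly independent. -/
noncomputable def krank {m n : Type*} [Fintype m] [Fintype n] (M : Matrix m n ℂ) : ℕ :=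
  sSup {r : ℕ | r ≤ Fintype.card n ∧
    ∀ s : Finset n, s.card = r → LinearIndependent ℂ (fun j : s => M.transpose (j : n))}

/-- The Khatri-Rao (columnwise Kronecker) product. -/
def khatriRao {p q V : Type*} (A : Matrix p V ℂ) (B : Matrix q V ℂ) :
    Matrix (p × q) V ℂ :=
  Matrix.of fun nm i => A nm.1 i * B nm.2 i

/-!
The sensing matrix factors as `B = ((S ⊗ I) Υ) A`: the Khatri-Rao product of the two manifolds
collects each virtual position `d_tx[n] + d_rx[m]` of the sum co-array, which `Υ` selects from
the rows of `A`. For any factorization `B = M A` with `A` having `N` rows, `krank B = N` forces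
`N` independent columns of `A` (so `krank A = N`) whose images under `M` stay independent (so `M`
has full column rank `N`); conversely an injective `M` preserves the independence of any `N`
columns of `A`.
-/

section KruskalRank

variable {m n : Type*} [Fintype m]

lemma card_le_card_height_of_linearIndependent_cols (B : Matrix m n ℂ) {s : Finset n}
    (h : LinearIndependent ℂ fun j : s => Bᵀ j) : s.card ≤ Fintype.card m := by
  simpa using h.fintype_card_le_finrank

lemma krank_eq_iff_of_forall_card_le [Fintype n] (B : Matrix m n ℂ) {r : ℕ}
    (hr : ∀ s : Finset n, (LinearIndependent ℂ fun j : s => Bᵀ j) → s.card ≤ r) :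
    krank B = r ↔
      r ≤ Fintype.card n ∧ ∀ s : Finset n, s.card = r → LinearIndependent ℂ fun j : s => Bᵀ j := by
  set P := {r : ℕ | r ≤ Fintype.card n ∧
    ∀ s : Finset n, s.card = r → LinearIndependent ℂ fun j : s => Bᵀ j}
  have hzero : 0 ∈ P := ⟨Nat.zero_le _, fun s hs => by
    rw [Finset.card_eq_zero.mp hs]
    exact linearIndependent_empty_type⟩
  have hbdd : BddAbove P := ⟨Fintype.card n, fun _ hk => hk.1⟩
  have hle : ∀ k ∈ P, k ≤ r := by
    rintro k ⟨hk, hli⟩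
    obtain ⟨s, -, rfl⟩ := Finset.exists_subset_card_eq (s := Finset.univ) (by simpa using hk)
    exact hr s (hli s rfl)
  change sSup P = _ ↔ _ ∈ P
  refine ⟨fun h => h ▸ Nat.sSup_mem ⟨0, hzero⟩ hbdd, fun h => ?_⟩
  exact le_antisymm (csSup_le ⟨0, hzero⟩ hle) (le_csSup hbdd h)

end KruskalRank

section Rank

variable {K m n : Type*} [Field K] [Fintype n]

lemma Matrix.card_le_rank_of_linearIndependent_mulVec {ι : Type*} [Fintype ι]
    (M : Matrix m n K) {v : ι → n → K} (h : LinearIndependent K fun i => M *ᵥ v i) :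
    Fintype.card ι ≤ M.rank := by
  rw [← finrank_span_eq_card h]
  exact Submodule.finrank_mono <| Submodule.span_le.mpr <| by
    rintro _ ⟨i, rfl⟩
    exact LinearMap.mem_range_self M.mulVecLin (v i)

lemma Matrix.rank_eq_card_width_iff_ker_eq_bot (M : Matrix m n K) :
    M.rank = Fintype.card n ↔ LinearMap.ker M.mulVecLin = ⊥ := by
  have h := LinearMap.finrank_range_add_finrank_ker M.mulVecLin
  rw [Module.finrank_fintype_fun_eq_card] at h
  change M.rank + _ = _ at h
  rw [← Submodule.finrank_eq_zero]
  omega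

lemma Matrix.transpose_mul_eq_mulVecLin {V : Type*} (M : Matrix m n K) (A : Matrix n V K)
    (j : V) : (M * A)ᵀ j = M.mulVecLin (Aᵀ j) := by
  ext
  simp [mul_apply, mulVec, dotProduct]

end Rank

theorem krank_mul_eq_card_iff {ρ n V : Type*} [Fintype ρ] [Fintype n] [Fintype V]
    (M : Matrix ρ n ℂ) (A : Matrix n V ℂ) :
    krank (M * A) = Fintype.card n ↔ krank A = Fintype.card n ∧ M.rank = Fintype.card n := by
  have hcols : ∀ s : Finset V,
      (fun j : s => (M * A)ᵀ j) = M.mulVecLin ∘ fun j : s => Aᵀ j :=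
    fun s => funext fun j => M.transpose_mul_eq_mulVecLin A j
  have hA := fun s => card_le_card_height_of_linearIndependent_cols A (s := s)
  rw [krank_eq_iff_of_forall_card_le A hA,
    krank_eq_iff_of_forall_card_le _ fun s h => hA s (by rw [hcols] at h; exact h.of_comp _)]
  simp only [hcols]
  constructor
  · rintro ⟨hcard, hli⟩
    refine ⟨⟨hcard, fun s hs => (hli s hs).of_comp _⟩, ?_⟩
    obtain ⟨s, -, hs⟩ :=
      Finset.exists_subset_card_eq (s := Finset.univ) (n := Fintype.card n) (by simpa using hcard)
    refine le_antisymm M.rank_le_card_width ?_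
    simpa [hs] using M.card_le_rank_of_linearIndependent_mulVec (hli s hs)
  · rintro ⟨⟨hcard, hli⟩, hrank⟩
    have hker := M.rank_eq_card_width_iff_ker_eq_bot.mp hrank
    exact ⟨hcard, fun s hs => (hli s hs).map' M.mulVecLin hker⟩

lemma kronecker_one_mul_khatriRao {p q T V : Type*} [Fintype p] [Fintype q] [DecidableEq q]
    (S : Matrix T p ℂ) (X : Matrix p V ℂ) (Y : Matrix q V ℂ) :
    (S ⊗ₖ (1 : Matrix q q ℂ)) * khatriRao X Y = khatriRao (S * X) Y := by
  ext ⟨t, m⟩ i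
  simp only [mul_apply, khatriRao, of_apply, kroneckerMap_apply, Fintype.sum_prod_type, one_apply,
    mul_ite, mul_one, mul_zero, ite_mul, zero_mul, Finset.sum_ite_eq, Finset.mem_univ, if_true,
    Finset.sum_mul, mul_assoc]

lemma khatriRao_of_map_add {p q V : Type*} (F : ℤ → V → ℂ)
    (hF : ∀ a b i, F (a + b) i = F a i * F b i) (d : p → ℤ) (e : q → ℤ) :
    khatriRao (of fun n i => F (d n) i) (of fun m i => F (e m) i) =
      of fun nm i => F (d nm.1 + e nm.2) i := by
  ext
  simp [khatriRao, hF]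

lemma of_ite_eq_mul_of {κ L α V : Type*} [Fintype L] [DecidableEq α] {f : κ → α} {g : L → α}
    (hg : Function.Injective g) (hfg : ∀ k, ∃ ℓ, g ℓ = f k) (F : α → V → ℂ) :
    (of fun k ℓ => if f k = g ℓ then (1 : ℂ) else 0) * (of fun ℓ i => F (g ℓ) i) =
      of fun k i => F (f k) i := by
  ext k i
  obtain ⟨ℓ₀, hℓ₀⟩ := hfg k
  have hother : ∀ ℓ, ℓ ≠ ℓ₀ → f k ≠ g ℓ := fun ℓ hℓ h => hℓ (hg (h.symm.trans hℓ₀.symm))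
  simp only [mul_apply, of_apply, ite_mul, one_mul, zero_mul]
  rw [Finset.sum_eq_single ℓ₀ (fun ℓ _ hℓ => if_neg (hother ℓ hℓ)) (by simp), if_pos hℓ₀.symm, hℓ₀]

theorem stmt_5_general (Ntx Nrx T V Nsum : ℕ)
    (dtx : Fin Ntx → ℤ) (drx : Fin Nrx → ℤ)
    (θ : Fin V → ℝ)
    (Atx : Matrix (Fin Ntx) (Fin V) ℂ)
    (hAtx : ∀ n i, Atx n i =
      Complex.exp (Complex.I * Real.pi * (dtx n : ℂ) * (Real.sin (θ i) : ℂ)))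
    (Arx : Matrix (Fin Nrx) (Fin V) ℂ)
    (hArx : ∀ m i, Arx m i =
      Complex.exp (Complex.I * Real.pi * (drx m : ℂ) * (Real.sin (θ i) : ℂ)))
    (dSig : Fin Nsum → ℤ) (hdSigMono : StrictMono dSig)
    (hdSigrange : ∀ z : ℤ, (∃ ℓ, dSig ℓ = z) ↔ ∃ n m, dtx n + drx m = z)
    (A : Matrix (Fin Nsum) (Fin V) ℂ)
    (hA : ∀ ℓ i, A ℓ i =
      Complex.exp (Complex.I * Real.pi * (dSig ℓ : ℂ) * (Real.sin (θ i) : ℂ)))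
    (Υ : Matrix (Fin Ntx × Fin Nrx) (Fin Nsum) ℂ)
    (hΥ : ∀ n m ℓ, Υ (n, m) ℓ = if dtx n + drx m = dSig ℓ then 1 else 0)
    (S : Matrix (Fin T) (Fin Ntx) ℂ) :
    krank (khatriRao (S * Atx) Arx) = Nsum ↔
      krank A = Nsum ∧
        ((S ⊗ₖ (1 : Matrix (Fin Nrx) (Fin Nrx) ℂ)) * Υ).rank = Nsum := by
  set F : ℤ → Fin V → ℂ := fun z i => Complex.exp (Complex.I * Real.pi * z * Real.sin (θ i))
  have hF : ∀ a b i, F (a + b) i = F a i * F b i := fun a b i => by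
    simp only [F, ← Complex.exp_add]
    push_cast
    ring_nf
  have hAtx' : Atx = of fun n i => F (dtx n) i := ext hAtx
  have hArx' : Arx = of fun m i => F (drx m) i := ext hArx
  have hA' : A = of fun ℓ i => F (dSig ℓ) i := ext hA
  have hΥ' : Υ = of fun nm ℓ => if dtx nm.1 + drx nm.2 = dSig ℓ then (1 : ℂ) else 0 :=
    ext fun nm ℓ => hΥ nm.1 nm.2 ℓ
  have hB : khatriRao (S * Atx) Arx = ((S ⊗ₖ (1 : Matrix (Fin Nrx) (Fin Nrx) ℂ)) * Υ) * A := by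
    rw [Matrix.mul_assoc, hΥ', hA',
      of_ite_eq_mul_of (f := fun nm : Fin Ntx × Fin Nrx => dtx nm.1 + drx nm.2)
        hdSigMono.injective fun nm => (hdSigrange _).mpr ⟨nm.1, nm.2, rfl⟩,
      ← khatriRao_of_map_add F hF, ← hAtx', ← hArx', kronecker_one_mul_khatriRao]
  rw [hB]
  simpa only [Fintype.card_fin] using krank_mul_eq_card_iff _ A

/-- in the redundancy-limited waveform-rank regime `rank S · N_rx ≥ N_Σ`,
`krank B = N_Σ` iff `krank A = N_Σ` and `rank ((S ⊗ I) Υ) = N_Σ`. -/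
theorem stmt_5 (Ntx Nrx T V Nsum : ℕ)
    (hNtx : 0 < Ntx) (hNrx : 0 < Nrx) (hT : 0 < T) (hV : 0 < V)
    (dtx : Fin Ntx → ℤ) (drx : Fin Nrx → ℤ)
    (hdtx0 : dtx ⟨0, hNtx⟩ = 0) (hdtxMono : StrictMono dtx)
    (hdrx0 : drx ⟨0, hNrx⟩ = 0) (hdrxMono : StrictMono drx)
    (θ : Fin V → ℝ) (hθinj : Function.Injective θ)
    (hθrange : ∀ i, θ i ∈ Set.Ico (-(Real.pi / 2)) (Real.pi / 2))
    (Atx : Matrix (Fin Ntx) (Fin V) ℂ)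
    (hAtx : ∀ n i, Atx n i =
      Complex.exp (Complex.I * Real.pi * (dtx n : ℂ) * (Real.sin (θ i) : ℂ)))
    (Arx : Matrix (Fin Nrx) (Fin V) ℂ)
    (hArx : ∀ m i, Arx m i =
      Complex.exp (Complex.I * Real.pi * (drx m : ℂ) * (Real.sin (θ i) : ℂ)))
    (dSig : Fin Nsum → ℤ) (hdSigMono : StrictMono dSig)
    (hdSigrange : ∀ z : ℤ, (∃ ℓ, dSig ℓ = z) ↔ ∃ n m, dtx n + drx m = z)
    (A : Matrix (Fin Nsum) (Fin V) ℂ)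
    (hA : ∀ ℓ i, A ℓ i =
      Complex.exp (Complex.I * Real.pi * (dSig ℓ : ℂ) * (Real.sin (θ i) : ℂ)))
    (Υ : Matrix (Fin Ntx × Fin Nrx) (Fin Nsum) ℂ)
    (hΥ : ∀ n m ℓ, Υ (n, m) ℓ = if dtx n + drx m = dSig ℓ then 1 else 0)
    (S : Matrix (Fin T) (Fin Ntx) ℂ)
    (hWR : Nsum ≤ S.rank * Nrx) :
    krank (khatriRao (S * Atx) Arx) = Nsum ↔
      krank A = Nsum ∧
        ((S ⊗ₖ (1 : Matrix (Fin Nrx) (Fin Nrx) ℂ)) * Υ).rank = Nsum :=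
  stmt_5_general Ntx Nrx T V Nsum dtx drx θ Atx hAtx Arx hArx dSig hdSigMono hdSigrange A hA Υ hΥ S
end

section
/- Fix integers N_tx, N_rx ≥ 1 and D ∈ ℕ_+ such that D divides N_rx and D ≤ N_rx, and let N_Σ = N_rx + (N_tx − 1)D. Consider the generalized nested array with Δ = D and pairwise distinct grid angles θ_1, …, θ_V ∈ [−π/2, π/2) with V ≥ N_Σ. Then for every integer N_s with 1 ≤ N_s ≤ N_tx, there exist T ∈ ℕ_+ and a waveform matrix S ∈ ℂ^{T×N_tx} with rank(S) = N_s such that the sensing matrix B = (S·A_tx) ⊙ A_rx satisfies krank(B) = min(N_s·N_rx, N_Σ). -/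
open Function Matrix

section KruskalRank

variable {m n : Type*} [Fintype m] [Fintype n]

theorem krank_le_rank (M : Matrix m n ℂ) : krank M ≤ M.rank := by
  refine csSup_le' fun r ⟨hr, hind⟩ => ?_
  obtain ⟨s, -, rfl⟩ := Finset.exists_subset_card_eq (s := Finset.univ) (by simpa using hr)
  rw [rank_eq_finrank_span_cols, ← Fintype.card_coe, ← finrank_span_eq_card (hind s rfl)]
  exact Submodule.finrank_mono (Submodule.span_mono (Set.range_comp_subset_range _ _))

theorem le_krank (M : Matrix m n ℂ) {r : ℕ} (hr : r ≤ Fintype.card n)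
    (hind : ∀ s : Finset n, s.card = r → LinearIndependent ℂ fun j : s => Mᵀ j) :
    r ≤ krank M :=
  le_csSup ⟨Fintype.card n, fun _ h => h.1⟩ ⟨hr, hind⟩

end KruskalRank

theorem linearIndependent_pow_of_injective {K ι : Type*} [Field K] [Fintype ι] {v : ι → K}
    (hv : Injective v) {n : ℕ} (hn : Fintype.card ι ≤ n) :
    LinearIndependent K fun i (k : Fin n) => v i ^ (k : ℕ) := by
  let e := Fintype.equivFin ι
  have hV : LinearIndependent K fun i => vandermonde (v ∘ e.symm) (e i) :=
    (linearIndependent_rows_of_det_ne_zero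
      (det_vandermonde_ne_zero_iff.2 (hv.comp e.symm.injective))).comp e e.injective
  refine LinearIndependent.of_comp (LinearMap.funLeft K K (Fin.castLE hn)) ?_
  convert hV using 1
  ext i k
  simp [e]

theorem krank_pow_of_range_eq_Iio {ρ V : Type*} [Fintype ρ] [Fintype V] {z : V → ℂ}
    (hz : Injective z) {e : ρ → ℕ} {r : ℕ} (he : Set.range e = Set.Iio r)
    (hr : r ≤ Fintype.card V) :
    krank (Matrix.of fun p i => z i ^ e p) = r := by
  have hmem : ∀ p, e p < r := fun p => (he ▸ Set.mem_range_self p : e p ∈ Set.Iio r)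
  let g : ρ → Fin r := fun p => ⟨e p, hmem p⟩
  have hg : Surjective g := fun k => by
    obtain ⟨p, hp⟩ := (he.symm ▸ k.isLt : (k : ℕ) ∈ Set.range e)
    exact ⟨p, Fin.ext hp⟩
  let W : Matrix (Fin r) V ℂ := Matrix.of fun k i => z i ^ (k : ℕ)
  have hW : (Matrix.of fun p i => z i ^ e p) = W.submatrix g id := rfl
  refine le_antisymm ((krank_le_rank _).trans ?_) (le_krank _ hr fun s hs => ?_)
  · rw [hW]
    exact (W.rank_submatrix_le g id).trans (W.rank_le_card_height.trans (by simp))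
  · have hcols : LinearIndependent ℂ fun i : s => Wᵀ i :=
      linearIndependent_pow_of_injective (hz.comp Subtype.val_injective) (by simp [hs])
    rw [hW]
    exact hcols.map' (LinearMap.funLeft ℂ ℂ g)
      (LinearMap.ker_eq_bot.2 (LinearMap.funLeft_injective_of_surjective _ _ g hg))

theorem exists_add_eq_of_succ_le_add {a : ℕ → ℕ} {L : ℕ} (hstep : ∀ j, a (j + 1) ≤ a j + L) :
    ∀ {N k : ℕ}, a 0 ≤ k → k < a N + L → ∃ j ≤ N, ∃ l < L, a j + l = k
  | 0, k, h0, hk => ⟨0, le_rfl, k - a 0, by omega, by omega⟩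
  | N + 1, k, h0, hk => by
    by_cases hkN : k < a N + L
    · obtain ⟨j, hj, l, hl, rfl⟩ := exists_add_eq_of_succ_le_add hstep h0 hkN
      exact ⟨j, by omega, l, hl, rfl⟩
    · have := hstep N
      exact ⟨N + 1, le_rfl, k - a (N + 1), by omega, by omega⟩

/-- The `j`-th transmitter selected by the waveform, for `c = N_rx / D` and `b = N_tx - N_s`. -/
def txSelection (c b j : ℕ) : ℕ := min (j * c) (b + j)

section TxSelection

variable {c : ℕ} (b : ℕ)

theorem txSelection_strictMono (hc : 0 < c) : StrictMono (txSelection c b) := fun j j' h =>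
  lt_min ((min_le_left _ _).trans_lt (Nat.mul_lt_mul_of_pos_right h hc))
    ((min_le_right _ _).trans_lt (by omega))

theorem txSelection_succ_le (hc : 0 < c) (j : ℕ) :
    txSelection c b (j + 1) ≤ txSelection c b j + c := by
  simp only [txSelection, ← min_add_add_right, add_mul, one_mul]
  exact min_le_min le_rfl (by omega)

theorem txSelection_mul_add (D p : ℕ) :
    txSelection c b p * D + c * D = min ((p + 1) * (c * D)) (c * D + (b + p) * D) := by
  simp only [txSelection, ← min_mul_mul_right, ← min_add_add_right]
  congr 1 <;> ring

theorem range_txSelection_mul_add (hc : 0 < c) {D Nrx Ns : ℕ} (hNrx : c * D = Nrx)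
    (hNs : 0 < Ns) :
    Set.range (fun p : Fin Ns × Fin Nrx => txSelection c b p.1 * D + p.2) =
      Set.Iio (min (Ns * Nrx) (Nrx + (b + (Ns - 1)) * D)) := by
  have htop :
      txSelection c b (Ns - 1) * D + Nrx = min (Ns * Nrx) (Nrx + (b + (Ns - 1)) * D) := by
    rw [← hNrx, txSelection_mul_add, Nat.sub_add_cancel hNs]
  rw [← htop]
  ext k
  constructor
  · rintro ⟨⟨j, l⟩, rfl⟩
    have := Nat.mul_le_mul_right D
      ((txSelection_strictMono b hc).monotone (Nat.le_sub_one_of_lt j.isLt))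
    simp only [Set.mem_Iio]
    omega
  · intro hk
    have hstep : ∀ j, txSelection c b (j + 1) * D ≤ txSelection c b j * D + Nrx := fun j => by
      simpa [← hNrx, add_mul] using Nat.mul_le_mul_right D (txSelection_succ_le b hc j)
    obtain ⟨j, hj, l, hl, rfl⟩ := exists_add_eq_of_succ_le_add
      (a := fun j => txSelection c b j * D) hstep (by simp [txSelection]) hk
    exact ⟨(⟨j, by omega⟩, ⟨l, hl⟩), rfl⟩

end TxSelection

theorem Matrix.rank_one_submatrix_of_injective {K m n : Type*} [Field K] [Fintype m] [Fintype n]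
    [DecidableEq n] {f : m → n} (hf : Injective f) :
    ((1 : Matrix n n K).submatrix f id).rank = Fintype.card m :=
  ((linearIndependent_rows_of_isUnit isUnit_one).comp f hf).rank_matrix

section ArrayManifold

open Real Set

theorem injOn_cexp_I_pi_mul_Ico {a b : ℝ} (h : b - a ≤ 2) :
    InjOn (fun x : ℝ => Complex.exp (Complex.I * π * x)) (Ico a b) := by
  intro x hx y hy hxy
  have hcirc : Circle.exp (π * x) = Circle.exp (π * y) := by
    ext
    simp only [Circle.coe_exp, Complex.ofReal_mul]
    convert hxy using 2 <;> ring
  have hmem : ∀ t ∈ Ico a b, π * t ∈ Ico (π * a) (π * b) := fun t ht =>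
    ⟨mul_le_mul_of_nonneg_left ht.1 pi_pos.le, mul_lt_mul_of_pos_left ht.2 pi_pos⟩
  exact mul_left_cancel₀ pi_ne_zero
    (Circle.exp_injOn_Ico (by nlinarith [pi_pos]) (hmem x hx) (hmem y hy) hcirc)

theorem sin_mem_Ico_neg_one_one {θ : ℝ} (hθ : θ ∈ Ico (-(π / 2)) (π / 2)) : sin θ ∈ Ico (-1) 1 :=
  ⟨neg_one_le_sin θ, sin_pi_div_two ▸ sin_lt_sin_of_lt_of_le_pi_div_two hθ.1 le_rfl hθ.2⟩

theorem injective_cexp_I_pi_sin {V : Type*} {θ : V → ℝ} (hθ : Injective θ)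
    (hrange : ∀ i, θ i ∈ Ico (-(π / 2)) (π / 2)) :
    Injective fun i => Complex.exp (Complex.I * π * sin (θ i)) := fun i i' h =>
  hθ <| injOn_sin (Ico_subset_Icc_self (hrange i)) (Ico_subset_Icc_self (hrange i')) <|
    injOn_cexp_I_pi_mul_Ico (by norm_num) (sin_mem_Ico_neg_one_one (hrange i))
      (sin_mem_Ico_neg_one_one (hrange i')) h

theorem cexp_I_pi_natCast_mul (d : ℕ) (x : ℝ) :
    Complex.exp (Complex.I * π * d * x) = Complex.exp (Complex.I * π * x) ^ d := by
  rw [← Complex.exp_nat_mul]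
  ring_nf

end ArrayManifold

theorem stmt_9_general (Ntx Nrx D V Nsum : ℕ)
    (hNrx : 0 < Nrx) (hDdvd : D ∣ Nrx)
    (hNsum : Nsum = Nrx + (Ntx - 1) * D)
    (dtx : Fin Ntx → ℤ) (hdtx : ∀ n, dtx n = (n : ℤ) * D)
    (drx : Fin Nrx → ℤ) (hdrx : ∀ m, drx m = (m : ℤ))
    (θ : Fin V → ℝ) (hθinj : Function.Injective θ)
    (hθrange : ∀ i, θ i ∈ Set.Ico (-(Real.pi / 2)) (Real.pi / 2))
    (hV : Nsum ≤ V)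
    (Atx : Matrix (Fin Ntx) (Fin V) ℂ)
    (hAtx : ∀ n i, Atx n i =
      Complex.exp (Complex.I * Real.pi * (dtx n : ℂ) * (Real.sin (θ i) : ℂ)))
    (Arx : Matrix (Fin Nrx) (Fin V) ℂ)
    (hArx : ∀ m i, Arx m i =
      Complex.exp (Complex.I * Real.pi * (drx m : ℂ) * (Real.sin (θ i) : ℂ))) :
    ∀ Ns : ℕ, 1 ≤ Ns → Ns ≤ Ntx →
      ∃ T : ℕ, 0 < T ∧ ∃ S : Matrix (Fin T) (Fin Ntx) ℂ,
        S.rank = Ns ∧ krank (khatriRao (S * Atx) Arx) = min (Ns * Nrx) Nsum := by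
  intro Ns hNs hNsNtx
  obtain ⟨c, hcD⟩ : ∃ c, c * D = Nrx := ⟨Nrx / D, Nat.div_mul_cancel hDdvd⟩
  have hc : 0 < c := Nat.pos_of_mul_pos_right (hcD ▸ hNrx)
  set b := Ntx - Ns
  let f : Fin Ns → Fin Ntx :=
    fun j => ⟨txSelection c b j, (min_le_right _ _).trans_lt (by omega)⟩
  have hf : Injective f := fun j j' h =>
    Fin.ext ((txSelection_strictMono b hc).injective (congrArg Fin.val h))
  have hB : khatriRao ((1 : Matrix (Fin Ntx) (Fin Ntx) ℂ).submatrix f id * Atx) Arx =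
      Matrix.of fun (p : Fin Ns × Fin Nrx) i =>
        Complex.exp (Complex.I * Real.pi * Real.sin (θ i)) ^ (txSelection c b p.1 * D + p.2) := by
    have hSA : (1 : Matrix (Fin Ntx) (Fin Ntx) ℂ).submatrix f id * Atx = Atx.submatrix f id :=
      Matrix.one_submatrix_mul f (Equiv.refl _) Atx
    ext ⟨j, l⟩ i
    simp only [hSA, khatriRao, Matrix.of_apply, Matrix.submatrix_apply, id, pow_add,
      ← cexp_I_pi_natCast_mul, hAtx, hdtx, hArx, hdrx, f]
    push_cast
    rfl
  have hexp := range_txSelection_mul_add b hc hcD hNs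
  rw [show b + (Ns - 1) = Ntx - 1 by omega, ← hNsum] at hexp
  refine ⟨Ns, hNs, _, (Matrix.rank_one_submatrix_of_injective hf).trans (Fintype.card_fin Ns), ?_⟩
  rw [hB, krank_pow_of_range_eq_Iio (injective_cexp_I_pi_sin hθinj hθrange) hexp]
  simpa using (min_le_right _ _).trans hV

/-- for the generalized nested array with spacing `Δ = D` (`D ∣ N_rx`,
`D ≤ N_rx`) and `N_Σ = N_rx + (N_tx − 1)·D`, for every `1 ≤ N_s ≤ N_tx` there is a
waveform matrix `S` of rank `N_s` such that the sensing matrix achieves the maximal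
Kruskal rank `min (N_s·N_rx) N_Σ`. -/
theorem stmt_9 (Ntx Nrx D V Nsum : ℕ)
    (hNtx : 0 < Ntx) (hNrx : 0 < Nrx) (hD : 0 < D) (hDdvd : D ∣ Nrx) (hDle : D ≤ Nrx)
    (hNsum : Nsum = Nrx + (Ntx - 1) * D)
    (dtx : Fin Ntx → ℤ) (hdtx : ∀ n, dtx n = (n : ℤ) * D)
    (drx : Fin Nrx → ℤ) (hdrx : ∀ m, drx m = (m : ℤ))
    (θ : Fin V → ℝ) (hθinj : Function.Injective θ)
    (hθrange : ∀ i, θ i ∈ Set.Ico (-(Real.pi / 2)) (Real.pi / 2))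
    (hV : Nsum ≤ V)
    (Atx : Matrix (Fin Ntx) (Fin V) ℂ)
    (hAtx : ∀ n i, Atx n i =
      Complex.exp (Complex.I * Real.pi * (dtx n : ℂ) * (Real.sin (θ i) : ℂ)))
    (Arx : Matrix (Fin Nrx) (Fin V) ℂ)
    (hArx : ∀ m i, Arx m i =
      Complex.exp (Complex.I * Real.pi * (drx m : ℂ) * (Real.sin (θ i) : ℂ))) :
    ∀ Ns : ℕ, 1 ≤ Ns → Ns ≤ Ntx →
      ∃ T : ℕ, 0 < T ∧ ∃ S : Matrix (Fin T) (Fin Ntx) ℂ,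
        S.rank = Ns ∧ krank (khatriRao (S * Atx) Arx) = min (Ns * Nrx) Nsum :=
  stmt_9_general Ntx Nrx D V Nsum hNrx hDdvd hNsum dtx hdtx drx hdrx θ hθinj hθrange hV Atx hAtx Arx
    hArx
end
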